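/- Let (R,δ) be an m₁-inverse loop with permutation J_R fixing δ and with J_R^{h₁} ∈ Aut(R), and (S,δ) an m₂-inverse loop with permutation J_S fixing δ and J_S^{h₂} ∈ Aut(S). Suppose φ: S×R → R satisfies φ(δ,r)=r, φ(s,δ)=δ, φ(J_S^m(ss'), φ(J_S^{m+1}(s),r)) = φ(J_S^m(s'),r), and φ(s,J_R^m(rr'))·φ(s,J_R^{m+1}(r)) = φ(s,J_R^m(r')) for an integer m with m ≡ m₁ (mod h₁) and m ≡ m₂ (mod h₂). If m is odd and moreover φ(J_S^m(ss'), φ(s,r)) = φ(J_S^m(s'),r) for all s,s' ∈ S, r ∈ R, then R×S with multiplication (r,s)(r',s') = (r·φ(s,r'), ss'), identity (δ,δ), and permutation J(r,s) = (φ(J_S(s),J_R(r)), J_S(s)) is an m-inverse loop. -/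

import Mathlib

/-!
Specialising the hypotheses on `φ` at `s' = δ` shows that `φ (J_S s)` is a two-sided inverse of
`φ s`; hence every `φ s` is a permutation, `φ ∘ J_S² = φ`, and, `m` being odd,
`φ ∘ J_S^m = φ ∘ J_S`. As every pair `(a, b)` of `R` has the form `(J_R^m (x y), J_R^(m+1) x)`,
the hypothesis on `φ s` and `J_R^m` turns into multiplicativity of `φ s`, so `φ s` commutes with
`J_R` by uniqueness of inverses. Consequently `J² = J_R² × J_S²`, which gives
`J^m (r, s) = (φ (J_S s) (J_R^m r), J_S^m s)` and `J^(m+1) = J_R^(m+1) × J_S^(m+1)`, and the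
`m`-inverse identity of the product splits into those of `R` and `S` together with
`φ (J_S (s s')) ∘ φ s = φ (J_S s')`.
-/

open Function Equiv

def MInverseProperty {α : Type*} [Mul α] (J : Perm α) (m : ℤ) : Prop :=
  ∀ x y : α, (J ^ m) (x * y) * (J ^ (m + 1)) x = (J ^ m) y

namespace Equiv.Perm

variable {α β : Type*}

theorem zpow_mul_apply_mul [Mul α] {J : Perm α} {h : ℤ}
    (hJ : ∀ a b, (J ^ h) (a * b) = (J ^ h) a * (J ^ h) b) (k : ℤ) (a b : α) :
    (J ^ (h * k)) (a * b) = (J ^ (h * k)) a * (J ^ (h * k)) b := by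
  let σ : MulAut α := { J ^ h with map_mul' := hJ }
  have hσ : J ^ (h * k) = MulAut.toPerm α (σ ^ k) := by rw [map_zpow, zpow_mul]; rfl
  rw [hσ]
  exact map_mul (σ ^ k) a b

theorem apply_zpow_apply_eq_of_apply_eq {f : α → β} {σ : Perm α} (h : ∀ x, f (σ x) = f x)
    (k : ℤ) (x : α) : f ((σ ^ k) x) = f x := by
  induction k using Int.induction_on generalizing x with
  | zero => rfl
  | succ n ih => rw [zpow_add_one, mul_apply, ih, h]
  | pred n ih =>
    rw [zpow_sub_one, mul_apply, ih, ← h (σ⁻¹ x)]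
    exact congrArg f (σ.apply_symm_apply x)

def prodCongrHom : Perm α × Perm β →* Perm (α × β) where
  toFun e := e.1.prodCongr e.2
  map_one' := rfl
  map_mul' _ _ := rfl

end Equiv.Perm

namespace MInverseProperty

variable {α : Type*} [Mul α] {J : Perm α} {m : ℤ}

/-- `J ^ (m - m₁)` is a power of the automorphism `J ^ h`; apply it to the `m₁`-identity. -/
theorem of_modEq {m₁ h : ℤ} (hJ : MInverseProperty J m₁)
    (hh : ∀ a b, (J ^ h) (a * b) = (J ^ h) a * (J ^ h) b) (hm : m ≡ m₁ [ZMOD h]) :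
    MInverseProperty J m := by
  obtain ⟨k, hk⟩ := hm.dvd
  intro x y
  have hx := congrArg (J ^ (h * -k)) (hJ x y)
  rw [Perm.zpow_mul_apply_mul hh] at hx
  simp only [← Perm.mul_apply, ← zpow_add] at hx
  rwa [show h * -k + m₁ = m by linarith, show h * -k + (m₁ + 1) = m + 1 by linarith] at hx

theorem map_mul_of_map_mInverse (hJ : MInverseProperty J m) (hdiv : ∀ a b : α, ∃ x, a * x = b)
    {β : Type*} [Mul β] {f : α → β}
    (hf : ∀ x y, f ((J ^ m) (x * y)) * f ((J ^ (m + 1)) x) = f ((J ^ m) y)) (a b : α) :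
    f (a * b) = f a * f b := by
  set x := (J ^ (m + 1))⁻¹ b
  obtain ⟨y, hy⟩ := hdiv x ((J ^ m)⁻¹ a)
  have ha : (J ^ m) (x * y) = a := by rw [hy]; exact (J ^ m).apply_symm_apply a
  have hb : (J ^ (m + 1)) x = b := (J ^ (m + 1)).apply_symm_apply b
  calc f (a * b) = f ((J ^ m) (x * y) * (J ^ (m + 1)) x) := by rw [ha, hb]
    _ = f ((J ^ m) (x * y)) * f ((J ^ (m + 1)) x) := by rw [hJ, hf]
    _ = f a * f b := by rw [ha, hb]

end MInverseProperty

section Twist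

variable {R S : Type*}

theorem exists_perm_inv_of_leftInverse {f : S → R → R} {J : Perm S} {m : ℤ}
    (h₀ : ∀ s, LeftInverse (f ((J ^ m) s)) (f s))
    (h₁ : ∀ s, LeftInverse (f ((J ^ m) s)) (f ((J ^ (m + 1)) s))) :
    ∃ ψ : S → Perm R, (∀ s, ⇑(ψ s) = f s) ∧ ∀ s, ψ (J s) = (ψ s)⁻¹ := by
  have hsucc : ∀ s, f ((J ^ (m + 1)) s) = f s := fun s =>
    funext fun r => (h₀ ((J ^ m) s)).injective ((h₁ s r).trans (h₀ s r).symm)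
  have hright : ∀ s, RightInverse (f (J s)) (f s) := fun s r => by
    have hr := h₀ (J s) r
    rwa [← Perm.mul_apply, ← zpow_add_one, hsucc] at hr
  have hleft : ∀ s, LeftInverse (f (J s)) (f s) := fun s r =>
    (h₀ s).injective (hright s (f s r))
  exact ⟨fun s => ⟨f s, f (J s), hleft s, hright s⟩, fun _ => rfl, fun _ => Equiv.ext fun _ => rfl⟩

theorem apply_comm_of_map_mul [Mul R] {δ : R} {J : Perm R} (hinv : ∀ r, r * J r = δ)
    (hcancel : ∀ a b : R, ∃! x, a * x = b) {f : R → R} (hf : ∀ a b, f (a * b) = f a * f b)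
    (hδ : f δ = δ) (r : R) : f (J r) = J (f r) :=
  (hcancel (f r) δ).unique (by rw [← hf, hinv, hδ]) (hinv _)

variable {JR : Perm R} {JS : Perm S} {ψ : S → Perm R}

theorem apply_zpow_of_odd (hψ : ∀ s, ψ (JS s) = (ψ s)⁻¹) {n : ℤ} (hn : Odd n) (s : S) :
    ψ ((JS ^ n) s) = ψ (JS s) := by
  obtain ⟨k, rfl⟩ := hn
  rw [zpow_add_one, Perm.mul_apply, zpow_mul]
  refine Perm.apply_zpow_apply_eq_of_apply_eq (fun x => ?_) k (JS s)
  rw [zpow_two, Perm.mul_apply, hψ, hψ, inv_inv]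

/-- `(r, s) ↦ (ψ (JS s) (JR r), JS s)`. -/
def twistedInv (JR : Perm R) (JS : Perm S) (ψ : S → Perm R) : Perm (R × S) :=
  (JR.prodCongr JS).trans (prodCongrLeft ψ)

theorem twistedInv_sq (hψ : ∀ s, ψ (JS s) = (ψ s)⁻¹) (hc : ∀ s, Commute (ψ s) JR) :
    twistedInv JR JS ψ ^ (2 : ℤ) = Perm.prodCongrHom (JR ^ (2 : ℤ), JS ^ (2 : ℤ)) := by
  rw [zpow_two, zpow_two, zpow_two]
  ext ⟨r, s⟩
  · change ψ (JS (JS s)) ((JR * ψ (JS s)) (JR r)) = JR (JR r)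
    rw [← (hc _).eq, hψ (JS s), Perm.mul_apply, Perm.inv_def, symm_apply_apply]
  · rfl

theorem twistedInv_zpow_even_apply (hψ : ∀ s, ψ (JS s) = (ψ s)⁻¹) (hc : ∀ s, Commute (ψ s) JR)
    {n : ℤ} (hn : Even n) (p : R × S) :
    (twistedInv JR JS ψ ^ n) p = ((JR ^ n) p.1, (JS ^ n) p.2) := by
  obtain ⟨k, rfl⟩ := hn
  rw [← two_mul, zpow_mul, zpow_mul, zpow_mul, twistedInv_sq hψ hc, ← map_zpow]
  rfl

theorem twistedInv_zpow_odd_apply (hψ : ∀ s, ψ (JS s) = (ψ s)⁻¹) (hc : ∀ s, Commute (ψ s) JR)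
    {n : ℤ} (hn : Odd n) (p : R × S) :
    (twistedInv JR JS ψ ^ n) p = (ψ (JS p.2) ((JR ^ n) p.1), (JS ^ n) p.2) := by
  obtain ⟨k, rfl⟩ := hn
  rw [zpow_add_one, Perm.mul_apply, twistedInv_zpow_even_apply hψ hc (even_two_mul k),
    zpow_add_one, zpow_add_one]
  exact Prod.ext (DFunLike.congr_fun ((hc (JS p.2)).zpow_right (2 * k)) (JR p.1)).symm rfl

variable [Mul R] [Mul S]

def twistedMul (ψ : S → Perm R) (p q : R × S) : R × S :=
  (p.1 * ψ p.2 q.1, p.2 * q.2)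

theorem twistedMul_left_div (hR : ∀ a b : R, ∃! x, a * x = b) (hS : ∀ a b : S, ∃! x, a * x = b)
    (a b : R × S) : ∃! x, twistedMul ψ a x = b := by
  obtain ⟨x₁, hx₁, hx₁u⟩ := hR a.1 b.1
  obtain ⟨x₂, hx₂, hx₂u⟩ := hS a.2 b.2
  refine ⟨((ψ a.2)⁻¹ x₁, x₂), Prod.ext ?_ hx₂,
    fun y hy => Prod.ext ?_ (hx₂u _ (congrArg Prod.snd hy))⟩
  · exact (congrArg (a.1 * ·) ((ψ a.2).apply_symm_apply x₁)).trans hx₁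
  · exact (ψ a.2).eq_symm_apply.mpr (hx₁u _ (congrArg Prod.fst hy))

theorem twistedMul_right_div (hR : ∀ a b : R, ∃! y, y * a = b) (hS : ∀ a b : S, ∃! y, y * a = b)
    (a b : R × S) : ∃! y, twistedMul ψ y a = b := by
  obtain ⟨y₂, hy₂, hy₂u⟩ := hS a.2 b.2
  obtain ⟨y₁, hy₁, hy₁u⟩ := hR (ψ y₂ a.1) b.1
  refine ⟨(y₁, y₂), Prod.ext hy₁ hy₂, fun z hz => ?_⟩
  obtain rfl : z.2 = y₂ := hy₂u _ (congrArg Prod.snd hz)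
  exact Prod.ext (hy₁u _ (congrArg Prod.fst hz)) rfl

theorem twistedMul_identity {δR : R} {δS : S} (hR : ∀ r, δR * r = r ∧ r * δR = r)
    (hS : ∀ s, δS * s = s ∧ s * δS = s) (hψδ : ∀ r, ψ δS r = r) (hψδ' : ∀ s, ψ s δR = δR)
    (p : R × S) : twistedMul ψ (δR, δS) p = p ∧ twistedMul ψ p (δR, δS) = p :=
  ⟨Prod.ext ((congrArg _ (hψδ _)).trans (hR _).1) (hS _).1,
    Prod.ext ((congrArg _ (hψδ' _)).trans (hR _).2) (hS _).2⟩

theorem twistedMul_twistedInv {δR : R} {δS : S} (hψ : ∀ s, ψ (JS s) = (ψ s)⁻¹)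
    (hinvR : ∀ r, r * JR r = δR) (hinvS : ∀ s, s * JS s = δS) (p : R × S) :
    twistedMul ψ p (twistedInv JR JS ψ p) = (δR, δS) := by
  refine Prod.ext ?_ (hinvS p.2)
  change p.1 * ψ p.2 (ψ (JS p.2) (JR p.1)) = δR
  rw [hψ, Perm.inv_def, apply_symm_apply, hinvR]

theorem twistedMul_mInverse {m : ℤ} (hR : MInverseProperty JR m) (hS : MInverseProperty JS m)
    (hm : Odd m) (hψ : ∀ s, ψ (JS s) = (ψ s)⁻¹) (hc : ∀ s, Commute (ψ s) JR)
    (hψR : ∀ s a b, ψ s (a * b) = ψ s a * ψ s b)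
    (hψS : ∀ s s' r, ψ ((JS ^ m) (s * s')) (ψ s r) = ψ ((JS ^ m) s') r) (p q : R × S) :
    twistedMul ψ ((twistedInv JR JS ψ ^ m) (twistedMul ψ p q)) ((twistedInv JR JS ψ ^ (m + 1)) p) =
      (twistedInv JR JS ψ ^ m) q := by
  obtain ⟨r, s⟩ := p
  obtain ⟨r', s'⟩ := q
  have hJS := apply_zpow_of_odd hψ hm
  have hψS' : ψ (JS (s * s')) (ψ s ((JR ^ m) r')) = ψ (JS s') ((JR ^ m) r') := by
    rw [← hJS, ← hJS, hψS]
  have hcomm : (JR ^ m) (ψ s r') = ψ s ((JR ^ m) r') :=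
    (DFunLike.congr_fun ((hc s).zpow_right m) r').symm
  simp only [twistedMul, twistedInv_zpow_odd_apply hψ hc hm,
    twistedInv_zpow_even_apply hψ hc hm.add_one]
  refine Prod.ext ?_ (hS s s')
  change ψ (JS (s * s')) ((JR ^ m) (r * ψ s r')) * ψ ((JS ^ m) (s * s')) ((JR ^ (m + 1)) r) = _
  rw [hJS, ← hψR, hR, hcomm, hψS']

end Twist

theorem stmt_11_general {R S : Type*} [Mul R] [Mul S] (δR : R) (δS : S)
    (hqR₁ : ∀ a b : R, ∃! x : R, a * x = b)
    (hqR₂ : ∀ a b : R, ∃! y : R, y * a = b)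
    (hqS₁ : ∀ a b : S, ∃! x : S, a * x = b)
    (hqS₂ : ∀ a b : S, ∃! y : S, y * a = b)
    (hδR : ∀ r : R, δR * r = r ∧ r * δR = r)
    (hδS : ∀ s : S, δS * s = s ∧ s * δS = s)
    (JR : Equiv.Perm R) (JS : Equiv.Perm S)
    (hJSδ : JS δS = δS)
    (hinvR : ∀ r : R, r * JR r = δR) (hinvS : ∀ s : S, s * JS s = δS)
    (m₁ m₂ h₁ h₂ m : ℤ)
    (hmR : ∀ x y : R, (JR ^ m₁) (x * y) * (JR ^ (m₁ + 1)) x = (JR ^ m₁) y)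
    (hmS : ∀ x y : S, (JS ^ m₂) (x * y) * (JS ^ (m₂ + 1)) x = (JS ^ m₂) y)
    (haR : ∀ x y : R, (JR ^ h₁) (x * y) = (JR ^ h₁) x * (JR ^ h₁) y)
    (haS : ∀ x y : S, (JS ^ h₂) (x * y) = (JS ^ h₂) x * (JS ^ h₂) y)
    (hc₁ : m ≡ m₁ [ZMOD h₁]) (hc₂ : m ≡ m₂ [ZMOD h₂])
    (φ : S → R → R)
    (hφδ : ∀ r : R, φ δS r = r) (hφδ' : ∀ s : S, φ s δR = δR)
    (hφ1 : ∀ (s s' : S) (r : R),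
      φ ((JS ^ m) (s * s')) (φ ((JS ^ (m + 1)) s) r) = φ ((JS ^ m) s') r)
    (hφ2 : ∀ (s : S) (r r' : R),
      φ s ((JR ^ m) (r * r')) * φ s ((JR ^ (m + 1)) r) = φ s ((JR ^ m) r'))
    (hodd : Odd m)
    (hφ3 : ∀ (s s' : S) (r : R),
      φ ((JS ^ m) (s * s')) (φ s r) = φ ((JS ^ m) s') r) :
    let mul : R × S → R × S → R × S :=
      fun p q => (p.1 * φ p.2 q.1, p.2 * q.2)
    ∃ J : Equiv.Perm (R × S),
      (∀ p : R × S, J p = (φ (JS p.2) (JR p.1), JS p.2)) ∧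
      ((∀ a b : R × S, ∃! x : R × S, mul a x = b) ∧
       (∀ a b : R × S, ∃! y : R × S, mul y a = b)) ∧
      (∀ p : R × S, mul (δR, δS) p = p ∧ mul p (δR, δS) = p) ∧
      (∀ p : R × S, mul p (J p) = (δR, δS)) ∧
      (∀ p q : R × S, mul ((J ^ m) (mul p q)) ((J ^ (m + 1)) p) = (J ^ m) q) := by
  intro mul
  have hmR' := MInverseProperty.of_modEq (J := JR) hmR haR hc₁
  have hmS' := MInverseProperty.of_modEq (J := JS) hmS haS hc₂
  have hfix := Perm.zpow_apply_eq_self_of_apply_eq_self hJSδ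
  obtain ⟨ψ, hψφ, hψ⟩ := exists_perm_inv_of_leftInverse (J := JS) (m := m)
    (fun s r => by simpa only [(hδS s).2, hfix, hφδ] using hφ3 s δS r)
    (fun s r => by simpa only [(hδS s).2, hfix, hφδ] using hφ1 s δS r)
  obtain rfl : φ = fun s => ⇑(ψ s) := (funext hψφ).symm
  have hψR : ∀ s a b, ψ s (a * b) = ψ s a * ψ s b := fun s =>
    hmR'.map_mul_of_map_mInverse (fun a b => (hqR₁ a b).exists) (hφ2 s)
  have hc : ∀ s, Commute (ψ s) JR := fun s =>
    Perm.ext (apply_comm_of_map_mul hinvR hqR₁ (hψR s) (hφδ' s))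
  exact ⟨twistedInv JR JS ψ, fun _ => rfl,
    ⟨twistedMul_left_div hqR₁ hqS₁, twistedMul_right_div hqR₂ hqS₂⟩,
    twistedMul_identity hδR hδS hφδ hφδ', twistedMul_twistedInv hψ hinvR hinvS,
    twistedMul_mInverse hmR' hmS' hodd hψ hc hψR hφ3⟩

theorem stmt_11 {R S : Type*} [Mul R] [Mul S] (δR : R) (δS : S)
    (hqR₁ : ∀ a b : R, ∃! x : R, a * x = b)
    (hqR₂ : ∀ a b : R, ∃! y : R, y * a = b)
    (hqS₁ : ∀ a b : S, ∃! x : S, a * x = b)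
    (hqS₂ : ∀ a b : S, ∃! y : S, y * a = b)
    (hδR : ∀ r : R, δR * r = r ∧ r * δR = r)
    (hδS : ∀ s : S, δS * s = s ∧ s * δS = s)
    (JR : Equiv.Perm R) (JS : Equiv.Perm S)
    (hJRδ : JR δR = δR) (hJSδ : JS δS = δS)
    (hinvR : ∀ r : R, r * JR r = δR) (hinvS : ∀ s : S, s * JS s = δS)
    (m₁ m₂ h₁ h₂ m : ℤ)
    (hmR : ∀ x y : R, (JR ^ m₁) (x * y) * (JR ^ (m₁ + 1)) x = (JR ^ m₁) y)
    (hmS : ∀ x y : S, (JS ^ m₂) (x * y) * (JS ^ (m₂ + 1)) x = (JS ^ m₂) y)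
    (haR : ∀ x y : R, (JR ^ h₁) (x * y) = (JR ^ h₁) x * (JR ^ h₁) y)
    (haS : ∀ x y : S, (JS ^ h₂) (x * y) = (JS ^ h₂) x * (JS ^ h₂) y)
    (hc₁ : m ≡ m₁ [ZMOD h₁]) (hc₂ : m ≡ m₂ [ZMOD h₂])
    (φ : S → R → R)
    (hφδ : ∀ r : R, φ δS r = r) (hφδ' : ∀ s : S, φ s δR = δR)
    (hφ1 : ∀ (s s' : S) (r : R),
      φ ((JS ^ m) (s * s')) (φ ((JS ^ (m + 1)) s) r) = φ ((JS ^ m) s') r)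
    (hφ2 : ∀ (s : S) (r r' : R),
      φ s ((JR ^ m) (r * r')) * φ s ((JR ^ (m + 1)) r) = φ s ((JR ^ m) r'))
    (hodd : Odd m)
    (hφ3 : ∀ (s s' : S) (r : R),
      φ ((JS ^ m) (s * s')) (φ s r) = φ ((JS ^ m) s') r) :
    let mul : R × S → R × S → R × S :=
      fun p q => (p.1 * φ p.2 q.1, p.2 * q.2)
    ∃ J : Equiv.Perm (R × S),
      (∀ p : R × S, J p = (φ (JS p.2) (JR p.1), JS p.2)) ∧
      ((∀ a b : R × S, ∃! x : R × S, mul a x = b) ∧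
       (∀ a b : R × S, ∃! y : R × S, mul y a = b)) ∧
      (∀ p : R × S, mul (δR, δS) p = p ∧ mul p (δR, δS) = p) ∧
      (∀ p : R × S, mul p (J p) = (δR, δS)) ∧
      (∀ p q : R × S, mul ((J ^ m) (mul p q)) ((J ^ (m + 1)) p) = (J ^ m) q) :=
  stmt_11_general δR δS hqR₁ hqR₂ hqS₁ hqS₂ hδR hδS JR JS hJSδ hinvR hinvS m₁ m₂ h₁ h₂ m hmR hmS haR
    haS hc₁ hc₂ φ hφδ hφδ' hφ1 hφ2 hodd hφ3
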